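/- Fix h ∈ ℝ and for x ∈ ι define the one-site Fermi Ornstein–Uhlenbeck generator L⁰_x acting on bounded operators g on ℋ by L⁰_x g = e^{h/2} ( (v_x g − g v_x) v_x* + v_x (g v_x* − v_x* g) ) + e^{−h/2} ( (v_x* g − g v_x*) v_x + v_x* (g v_x − v_x g) ). Let Λ be a finite subset of ι and let f belong to the star-subalgebra of B(ℋ) generated by {a_x : x ∈ Λ}, and set 𝓛₀ f = ∑_{x∈Λ} L⁰_x f. Then for every y ∈ ι: ∂_y(𝓛₀ f) − ∑_{x∈Λ} L⁰_x(∂_y f) = −2 cosh(h/2) · ∂_y f, and ∂̄_y(𝓛₀ f) − ∑_{x∈Λ} L⁰_x(∂̄_y f) = −2 cosh(h/2) · ∂̄_y f. -/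

import Mathlib

/-- The fermionic Fock space over the lattice `ι`: the Hilbert space `ℓ²` of
square-summable complex families indexed by the finite subsets of `ι`. -/
noncomputable abbrev FockSpace (ι : Type*) := lp (fun _ : Finset ι => ℂ) 2

/-- The canonical orthonormal basis vector `e_X` of the Fock space. -/
noncomputable def fockBasis {ι : Type*} [DecidableEq ι] (X : Finset ι) : FockSpace ι :=
  lp.single 2 X (1 : ℂ)

/-- The fermionic derivative `∂_x f := w [v_x, f]`, where `v_x = w a_x`. -/
noncomputable def fermiD {ι : Type*} (w : FockSpace ι →L[ℂ] FockSpace ι)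
    (a : ι → (FockSpace ι →L[ℂ] FockSpace ι)) (x : ι)
    (f : FockSpace ι →L[ℂ] FockSpace ι) : FockSpace ι →L[ℂ] FockSpace ι :=
  w * ((w * a x) * f - f * (w * a x))

/-- The fermionic derivative `∂̄_x f := −w [v_x*, f]`, where `v_x = w a_x`. -/
noncomputable def fermiDBar {ι : Type*} (w : FockSpace ι →L[ℂ] FockSpace ι)
    (a : ι → (FockSpace ι →L[ℂ] FockSpace ι)) (x : ι)
    (f : FockSpace ι →L[ℂ] FockSpace ι) : FockSpace ι →L[ℂ] FockSpace ι :=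
  -(w * (star (w * a x) * f - f * star (w * a x)))

/-- The one-site Fermi Ornstein–Uhlenbeck generator
`L⁰_x g = e^{h/2}([v_x,g]v_x* + v_x[g,v_x*]) + e^{−h/2}([v_x*,g]v_x + v_x*[g,v_x])`,
with `v_x = w a_x`. -/
noncomputable def fermiOU {ι : Type*} (w : FockSpace ι →L[ℂ] FockSpace ι)
    (a : ι → (FockSpace ι →L[ℂ] FockSpace ι)) (h : ℝ) (x : ι)
    (g : FockSpace ι →L[ℂ] FockSpace ι) : FockSpace ι →L[ℂ] FockSpace ι :=
  (Real.exp (h / 2) : ℂ) •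
      (((w * a x) * g - g * (w * a x)) * star (w * a x)
        + (w * a x) * (g * star (w * a x) - star (w * a x) * g)) +
  (Real.exp (-h / 2) : ℂ) •
      ((star (w * a x) * g - g * star (w * a x)) * (w * a x)
        + star (w * a x) * (g * (w * a x) - (w * a x) * g))

/-!
Write `v_x = w a_x`. Because `w` is a self-adjoint involution anticommuting with every `a_x`, the
operators `v_x, v_x*` satisfy the same canonical anticommutation relations as `a_x, a_x*`, and `w`
anticommutes with them. For `P, Q ∈ {v_x, v_x*}`, commuting the twisted derivation `w [V, ·]`
(`V = v_y` or `v_y*`) past the term `[P, g] Q + P [g, Q]` of `L⁰_x` is then a ring identity which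
leaves only the anticommutators `{V, P}`, `{V, Q}`, all of which are `0` or `δ_{xy}`. Hence
`∂_y L⁰_x g - L⁰_x ∂_y g = -δ_{xy} (e^{h/2} + e^{-h/2}) ∂_y g`, and summing over `x ∈ Λ`
leaves the term `x = y`. When `y ∉ Λ`, both `v_y` and `v_y*` commute with every `a_x`, `x ∈ Λ`,
hence with `f`, so that `∂_y f = ∂̄_y f = 0` as well.
-/

namespace Fermion

section Sandwich

variable {R A : Type*} [CommRing R] [Ring A] [Algebra R A]

def commSandwich (P Q g : A) : A := (P * g - g * P) * Q + P * (g * Q - Q * g)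

def ouGenerator (c c' : R) (P Q g : A) : A := c • commSandwich P Q g + c' • commSandwich Q P g

def anticommSandwich (P Q k : A) : A := (P * k + k * P) * Q + P * (k * Q + Q * k)

def twistedComm (W V g : A) : A := W * (V * g - g * V)

theorem commSandwich_neg (P Q g : A) : commSandwich P Q (-g) = -commSandwich P Q g := by
  unfold commSandwich; noncomm_ring

theorem ouGenerator_neg (c c' : R) (P Q g : A) :
    ouGenerator c c' P Q (-g) = -ouGenerator c c' P Q g := by
  simp only [ouGenerator, commSandwich_neg, smul_neg, neg_add]

theorem commSandwich_mul_left {W P Q : A} (hP : W * P + P * W = 0) (hQ : W * Q + Q * W = 0)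
    (k : A) :
    commSandwich P Q (W * k) = -(W * anticommSandwich P Q k) := by
  have e : commSandwich P Q (W * k) + W * anticommSandwich P Q k
      = 2 * (W * P + P * W) * k * Q + (W * P + P * W) * Q * k - P * (W * Q + Q * W) * k := by
    unfold commSandwich anticommSandwich; noncomm_ring
  rw [hP, hQ] at e
  simpa [eq_neg_iff_add_eq_zero] using e

theorem commutator_commSandwich_add_anticommSandwich {V P Q : A} {dP dQ : R}
    (hP : V * P + P * V = dP • (1 : A)) (hQ : V * Q + Q * V = dQ • (1 : A)) (g : A) :
    (V * commSandwich P Q g - commSandwich P Q g * V) + anticommSandwich P Q (V * g - g * V)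
      = -(dP • (Q * g - g * Q) + dQ • (P * g - g * P)) := by
  -- a ring identity in which `V` enters only through the anticommutators `{V, P}` and `{V, Q}`
  have e : (V * commSandwich P Q g - commSandwich P Q g * V)
        + anticommSandwich P Q (V * g - g * V)
      = 2 * ((V * P + P * V) * g * Q - P * g * (V * Q + Q * V))
        + g * (P * (V * Q + Q * V) - (V * P + P * V) * Q)
        + (P * (V * Q + Q * V) - (V * P + P * V) * Q) * g := by
    unfold commSandwich anticommSandwich; noncomm_ring
  rw [e, hP, hQ]
  simp only [two_mul, mul_sub, sub_mul, smul_mul_assoc, mul_smul_comm, one_mul, mul_one]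
  module

theorem twistedComm_commSandwich_sub {W V P Q : A} {dP dQ : R}
    (hWP : W * P + P * W = 0) (hWQ : W * Q + Q * W = 0)
    (hVP : V * P + P * V = dP • (1 : A)) (hVQ : V * Q + Q * V = dQ • (1 : A)) (g : A) :
    twistedComm W V (commSandwich P Q g) - commSandwich P Q (twistedComm W V g)
      = -(dP • twistedComm W Q g + dQ • twistedComm W P g) := by
  rw [twistedComm, twistedComm, commSandwich_mul_left hWP hWQ, sub_neg_eq_add, ← mul_add,
    commutator_commSandwich_add_anticommSandwich hVP hVQ, twistedComm, twistedComm, mul_neg,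
    mul_add, mul_smul_comm, mul_smul_comm]

theorem twistedComm_ouGenerator_sub {W V P Q : A} {dP dQ : R}
    (hWP : W * P + P * W = 0) (hWQ : W * Q + Q * W = 0)
    (hVP : V * P + P * V = dP • (1 : A)) (hVQ : V * Q + Q * V = dQ • (1 : A))
    (c c' : R) (g : A) :
    twistedComm W V (ouGenerator c c' P Q g) - ouGenerator c c' P Q (twistedComm W V g)
      = -((c + c') • (dP • twistedComm W Q g + dQ • twistedComm W P g)) := by
  have hPQ := twistedComm_commSandwich_sub hWP hWQ hVP hVQ g
  have hQP := twistedComm_commSandwich_sub hWQ hWP hVQ hVP g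
  calc twistedComm W V (ouGenerator c c' P Q g) - ouGenerator c c' P Q (twistedComm W V g)
      = c • (twistedComm W V (commSandwich P Q g) - commSandwich P Q (twistedComm W V g))
        + c' • (twistedComm W V (commSandwich Q P g) - commSandwich Q P (twistedComm W V g)) := by
        simp only [ouGenerator, twistedComm, mul_add, add_mul, mul_sub, mul_smul_comm,
          smul_mul_assoc]
        module
    _ = _ := by rw [hPQ, hQP]; module

end Sandwich

section Involution

variable {A : Type*} [Ring A] {W P Q : A}

theorem anticomm_mul_left (hP : W * P + P * W = 0) :
    W * (W * P) + (W * P) * W = 0 := by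
  rw [mul_assoc, ← mul_add, hP, mul_zero]

theorem anticomm_mul_right (hP : W * P + P * W = 0) :
    W * (P * W) + (P * W) * W = 0 := by
  rw [← mul_assoc, ← add_mul, hP, zero_mul]

theorem mul_anticomm_mul (hW : W * W = 1) (hP : W * P + P * W = 0) (hQ : W * Q + Q * W = 0) :
    (W * P) * (W * Q) + (W * Q) * (W * P) = -(P * Q + Q * P) := by
  have e : (W * P) * (W * Q) + (W * Q) * (W * P) + (P * Q + Q * P)
      = W * (W * P + P * W) * Q + W * (W * Q + Q * W) * P - (W * W - 1) * (P * Q + Q * P) := by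
    noncomm_ring
  rw [hP, hQ, hW] at e
  exact eq_neg_of_add_eq_zero_left (by simpa using e)

theorem mul_anticomm_mul_right (hW : W * W = 1) (hP : W * P + P * W = 0)
    (hQ : W * Q + Q * W = 0) :
    (W * P) * (Q * W) + (Q * W) * (W * P) = P * Q + Q * P := by
  have e : (W * P) * (Q * W) + (Q * W) * (W * P) - (P * Q + Q * P)
      = W * P * (W * Q + Q * W) - (W * P + P * W) * W * Q + P * (W * W - 1) * Q
        + Q * (W * W - 1) * P := by
    noncomm_ring
  rw [hP, hQ, hW] at e
  simpa [sub_eq_zero] using e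

theorem commute_mul_left_of_anticomm (hP : W * P + P * W = 0) (hPQ : P * Q + Q * P = 0) :
    Commute (W * Q) P := by
  have e : W * Q * P - P * (W * Q) = W * (P * Q + Q * P) - (W * P + P * W) * Q := by
    noncomm_ring
  rw [hP, hPQ] at e
  exact sub_eq_zero.mp (by simpa using e)

theorem commute_mul_right_of_anticomm (hP : W * P + P * W = 0) (hPQ : P * Q + Q * P = 0) :
    Commute (Q * W) P := by
  have e : Q * W * P - P * (Q * W) = Q * (W * P + P * W) - (P * Q + Q * P) * W := by
    noncomm_ring
  rw [hP, hPQ] at e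
  exact sub_eq_zero.mp (by simpa using e)

end Involution

section FockBasis

variable {ι : Type*} [DecidableEq ι]

theorem fockBasis_apply (X Y : Finset ι) : fockBasis X Y = if Y = X then 1 else 0 := by
  rw [fockBasis, lp.single_apply, Pi.single_apply]

theorem ext_fockBasis {T S : FockSpace ι →L[ℂ] FockSpace ι}
    (h : ∀ X, T (fockBasis X) = S (fockBasis X)) : T = S :=
  lp.ext_continuousLinearMap (by norm_num) fun X => ContinuousLinearMap.ext_ring (h X)

theorem inner_fockBasis_left (X : Finset ι) (v : FockSpace ι) :
    inner ℂ (fockBasis X) v = v X := by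
  simp [fockBasis, lp.inner_single_left]

theorem star_apply_fockBasis_apply (T : FockSpace ι →L[ℂ] FockSpace ι) (X Y : Finset ι) :
    star T (fockBasis X) Y = star (T (fockBasis Y) X) := by
  rw [← inner_fockBasis_left, ← inner_fockBasis_left, ContinuousLinearMap.star_eq_adjoint,
    ContinuousLinearMap.adjoint_inner_right]
  exact (inner_conj_symm _ _).symm

def IsParity (w : FockSpace ι →L[ℂ] FockSpace ι) : Prop :=
  ∀ X, w (fockBasis X) = ((-1 : ℂ) ^ X.card) • fockBasis X

variable {w : FockSpace ι →L[ℂ] FockSpace ι} (hw : IsParity w)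
include hw

theorem parity_mul_self : w * w = 1 :=
  ext_fockBasis fun X => by
    rw [mul_apply_eq_comp, hw, map_smul, hw, smul_smul, ← pow_add, ← two_mul, pow_mul,
      neg_one_sq, one_pow, one_smul, one_apply_eq_self]

theorem star_parity : star w = w :=
  ext_fockBasis fun X => lp.ext <| funext fun Y => by
    rw [star_apply_fockBasis_apply, hw, hw]
    by_cases hXY : Y = X
    · subst hXY; simp [fockBasis_apply]
    · simp [fockBasis_apply, hXY, Ne.symm hXY]

theorem star_parity_mul (T : FockSpace ι →L[ℂ] FockSpace ι) : star (w * T) = star T * w := by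
  rw [star_mul, star_parity hw]

end FockBasis

section JordanWigner

variable {ι : Type*} [LinearOrder ι]

def jordanWignerSign (x : ι) (X : Finset ι) : ℂ := (-1) ^ (X.filter (· < x)).card

theorem star_jordanWignerSign (x : ι) (X : Finset ι) :
    star (jordanWignerSign x X) = jordanWignerSign x X := by
  simp [jordanWignerSign]

theorem jordanWignerSign_mul_self (x : ι) (X : Finset ι) :
    jordanWignerSign x X * jordanWignerSign x X = 1 := by
  rw [jordanWignerSign, ← pow_add, ← two_mul, pow_mul, neg_one_sq, one_pow]

theorem jordanWignerSign_insert {x y : ι} {X : Finset ι} (hy : y ∉ X) :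
    jordanWignerSign x (insert y X) = (if y < x then -1 else 1) * jordanWignerSign x X := by
  unfold jordanWignerSign
  rw [Finset.filter_insert]
  split_ifs with hyx
  · rw [Finset.card_insert_of_notMem (by simp [hy]), pow_succ, mul_comm]
  · rw [one_mul]

theorem jordanWignerSign_erase {x y : ι} {X : Finset ι} (hy : y ∈ X) :
    jordanWignerSign x (X.erase y) = (if y < x then -1 else 1) * jordanWignerSign x X := by
  conv_rhs =>
    rw [← Finset.insert_erase hy, jordanWignerSign_insert (Finset.notMem_erase y X), ← mul_assoc]
  split_ifs <;> norm_num

theorem ite_lt_add_ite_lt_of_ne {x y : ι} (hxy : x ≠ y) :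
    (if x < y then (-1 : ℂ) else 1) + (if y < x then -1 else 1) = 0 := by
  rcases hxy.lt_or_gt with h | h <;> simp [h, h.not_gt]

def IsJordanWignerAnnihilation (a : ι → (FockSpace ι →L[ℂ] FockSpace ι)) : Prop :=
  ∀ x X, a x (fockBasis X) = if x ∈ X then jordanWignerSign x X • fockBasis (X.erase x) else 0

variable {a : ι → (FockSpace ι →L[ℂ] FockSpace ι)} (ha : IsJordanWignerAnnihilation a)
include ha

theorem star_annihilation_apply_fockBasis (x : ι) (X : Finset ι) :
    star (a x) (fockBasis X)
      = if x ∈ X then 0 else jordanWignerSign x X • fockBasis (insert x X) := by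
  refine lp.ext (funext fun Y => ?_)
  rw [star_apply_fockBasis_apply, ha]
  by_cases hxY : x ∈ Y <;> by_cases hxX : x ∈ X
  · have : X ≠ Y.erase x := fun h => by simp [h] at hxX
    simp [hxY, hxX, fockBasis_apply, this]
  · have : X = Y.erase x ↔ Y = insert x X := by
      constructor <;> rintro rfl
      · rw [Finset.insert_erase hxY]
      · rw [Finset.erase_insert hxX]
    by_cases hY : Y = insert x X
    · subst hY
      simp [hxX, fockBasis_apply, star_jordanWignerSign, jordanWignerSign_insert hxX]
    · simp [hxY, hxX, fockBasis_apply, this, hY]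
  · simp [hxY, hxX]
  · have : Y ≠ insert x X := fun h => by simp [h] at hxY
    simp [hxY, hxX, fockBasis_apply, this]

theorem annihilation_anticomm (x y : ι) : a x * a y + a y * a x = 0 := by
  refine ext_fockBasis fun X => ?_
  rw [add_apply, mul_apply_eq_comp, mul_apply_eq_comp, zero_apply, ha y X, ha x X]
  by_cases hxy : x = y
  · subst hxy
    split_ifs with hx
    · simp [ha x, hx]
    · simp
  by_cases hx : x ∈ X <;> by_cases hy : y ∈ X
  · simp only [hx, hy, if_true, map_smul, ha x, ha y, Finset.mem_erase, hxy, Ne.symm hxy,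
      ne_eq, not_false_eq_true, true_and, smul_smul, Finset.erase_right_comm (a := x) (b := y),
      ← add_smul]
    rw [jordanWignerSign_erase hx, jordanWignerSign_erase hy, smul_eq_zero]
    left
    linear_combination jordanWignerSign x X * jordanWignerSign y X * ite_lt_add_ite_lt_of_ne hxy
  all_goals simp [hx, hy, ha x, ha y]

theorem annihilation_star_anticomm (x y : ι) :
    a x * star (a y) + star (a y) * a x = if x = y then 1 else 0 := by
  refine ext_fockBasis fun X => ?_
  rw [add_apply, mul_apply_eq_comp, mul_apply_eq_comp, star_annihilation_apply_fockBasis ha,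
    ha x X]
  by_cases hxy : x = y
  · subst hxy
    by_cases hx : x ∈ X
    · simp [hx, star_annihilation_apply_fockBasis ha, jordanWignerSign_erase hx, smul_smul,
        jordanWignerSign_mul_self]
    · simp [hx, ha x, jordanWignerSign_insert hx, smul_smul, jordanWignerSign_mul_self]
  rw [if_neg hxy, zero_apply]
  by_cases hx : x ∈ X <;> by_cases hy : y ∈ X
  · have hyx : y ∈ X.erase x := Finset.mem_erase.mpr ⟨Ne.symm hxy, hy⟩
    simp [hx, hy, hyx, star_annihilation_apply_fockBasis ha]
  · have hyx : y ∉ X.erase x := fun h => hy (Finset.mem_of_mem_erase h)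
    rw [if_pos hx, if_neg hy, map_smul, map_smul, ha x, star_annihilation_apply_fockBasis ha,
      if_pos (Finset.mem_insert_of_mem hx), if_neg hyx, smul_smul, smul_smul,
      Finset.erase_insert_of_ne (Ne.symm hxy), ← add_smul, jordanWignerSign_insert hy,
      jordanWignerSign_erase hx,
      smul_eq_zero]
    left
    linear_combination jordanWignerSign x X * jordanWignerSign y X * ite_lt_add_ite_lt_of_ne hxy
  all_goals simp [hx, hy, hxy, ha x]

end JordanWigner

section Twisted

variable {ι : Type*} [LinearOrder ι] {a : ι → (FockSpace ι →L[ℂ] FockSpace ι)}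
  {w : FockSpace ι →L[ℂ] FockSpace ι} (ha : IsJordanWignerAnnihilation a) (hw : IsParity w)
include ha hw

theorem parity_anticomm_annihilation (x : ι) : w * a x + a x * w = 0 := by
  refine ext_fockBasis fun X => ?_
  rw [add_apply, mul_apply_eq_comp, mul_apply_eq_comp, zero_apply, ha x X, hw X, map_smul, ha x X]
  split_ifs with hx
  · rw [map_smul, hw, smul_smul, smul_smul, ← add_smul, ← Finset.card_erase_add_one hx,
      pow_succ, smul_eq_zero]
    left; ring
  · simp

theorem parity_anticomm_star_annihilation (x : ι) : w * star (a x) + star (a x) * w = 0 := by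
  simpa [star_parity hw, add_comm] using congrArg star (parity_anticomm_annihilation ha hw x)

theorem parity_anticomm_twisted (x : ι) : w * (w * a x) + (w * a x) * w = 0 :=
  anticomm_mul_left (parity_anticomm_annihilation ha hw x)

theorem parity_anticomm_star_twisted (x : ι) :
    w * star (w * a x) + star (w * a x) * w = 0 := by
  rw [star_parity_mul hw]
  exact anticomm_mul_right (parity_anticomm_star_annihilation ha hw x)

theorem twisted_anticomm (x y : ι) : (w * a x) * (w * a y) + (w * a y) * (w * a x) = 0 := by
  rw [mul_anticomm_mul (parity_mul_self hw) (parity_anticomm_annihilation ha hw x)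
    (parity_anticomm_annihilation ha hw y), annihilation_anticomm ha, neg_zero]

theorem twisted_star_anticomm (x y : ι) :
    (w * a x) * star (w * a y) + star (w * a y) * (w * a x) = if x = y then 1 else 0 := by
  rw [star_parity_mul hw, mul_anticomm_mul_right (parity_mul_self hw)
    (parity_anticomm_annihilation ha hw x) (parity_anticomm_star_annihilation ha hw y),
    annihilation_star_anticomm ha]

theorem star_twisted_anticomm (x y : ι) :
    star (w * a x) * star (w * a y) + star (w * a y) * star (w * a x) = 0 := by
  simpa [star_mul, add_comm] using congrArg star (twisted_anticomm ha hw y x)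

theorem star_twisted_twisted_anticomm (x y : ι) :
    star (w * a x) * (w * a y) + (w * a y) * star (w * a x) = if x = y then 1 else 0 := by
  rw [add_comm, twisted_star_anticomm ha hw]
  exact if_congr eq_comm rfl rfl

end Twisted

section Generator

variable {ι : Type*} (w : FockSpace ι →L[ℂ] FockSpace ι)
  (a : ι → (FockSpace ι →L[ℂ] FockSpace ι))

theorem fermiOU_eq_ouGenerator (h : ℝ) (x : ι) (g : FockSpace ι →L[ℂ] FockSpace ι) :
    fermiOU w a h x g
      = ouGenerator (Real.exp (h / 2) : ℂ) (Real.exp (-h / 2) : ℂ) (w * a x) (star (w * a x))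
          g :=
  rfl

theorem fermiD_eq_twistedComm (y : ι) (g : FockSpace ι →L[ℂ] FockSpace ι) :
    fermiD w a y g = twistedComm w (w * a y) g :=
  rfl

theorem fermiDBar_eq_neg_twistedComm (y : ι) (g : FockSpace ι →L[ℂ] FockSpace ι) :
    fermiDBar w a y g = -twistedComm w (star (w * a y)) g :=
  rfl

theorem fermiD_sum (y : ι) {κ : Type*} (s : Finset κ)
    (F : κ → FockSpace ι →L[ℂ] FockSpace ι) :
    fermiD w a y (∑ i ∈ s, F i) = ∑ i ∈ s, fermiD w a y (F i) := by
  simp only [fermiD, Finset.mul_sum, Finset.sum_mul, ← Finset.sum_sub_distrib]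

theorem fermiDBar_sum (y : ι) {κ : Type*} (s : Finset κ)
    (F : κ → FockSpace ι →L[ℂ] FockSpace ι) :
    fermiDBar w a y (∑ i ∈ s, F i) = ∑ i ∈ s, fermiDBar w a y (F i) := by
  simp only [fermiDBar, Finset.mul_sum, Finset.sum_mul, ← Finset.sum_sub_distrib,
    Finset.sum_neg_distrib]

theorem fermiD_eq_zero_and_fermiDBar_eq_zero_of_mem_centralizer {y : ι}
    {f : FockSpace ι →L[ℂ] FockSpace ι}
    (hf : f ∈ StarSubalgebra.centralizer ℂ {w * a y}) :
    fermiD w a y f = 0 ∧ fermiDBar w a y f = 0 := by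
  obtain ⟨hv, hvstar⟩ := (StarSubalgebra.mem_centralizer_iff ℂ).mp hf _ rfl
  rw [fermiD, fermiDBar, hv, hvstar, sub_self, sub_self, mul_zero, neg_zero]
  exact ⟨rfl, rfl⟩

theorem exp_half_add_exp_neg_half (h : ℝ) :
    (Real.exp (h / 2) : ℂ) + Real.exp (-h / 2) = ((2 * Real.cosh (h / 2) : ℝ) : ℂ) := by
  rw [Real.cosh_eq, neg_div]
  push_cast
  ring

end Generator

section Intertwining

variable {ι : Type*} [LinearOrder ι] {a : ι → (FockSpace ι →L[ℂ] FockSpace ι)}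
  {w : FockSpace ι →L[ℂ] FockSpace ι} (ha : IsJordanWignerAnnihilation a) (hw : IsParity w)
include ha hw

theorem fermiD_fermiOU_sub (h : ℝ) (x y : ι) (g : FockSpace ι →L[ℂ] FockSpace ι) :
    fermiD w a y (fermiOU w a h x g) - fermiOU w a h x (fermiD w a y g)
      = if x = y then ((-(2 * Real.cosh (h / 2)) : ℝ) : ℂ) • fermiD w a y g else 0 := by
  have hVP : (w * a y) * (w * a x) + (w * a x) * (w * a y) = (0 : ℂ) • 1 := by
    rw [twisted_anticomm ha hw, zero_smul]
  have hVQ : (w * a y) * star (w * a x) + star (w * a x) * (w * a y)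
      = (if x = y then (1 : ℂ) else 0) • 1 := by
    rw [twisted_star_anticomm ha hw]
    by_cases hxy : x = y
    · simp [hxy]
    · simp [hxy, Ne.symm hxy]
  rw [fermiOU_eq_ouGenerator, fermiOU_eq_ouGenerator, fermiD_eq_twistedComm,
    fermiD_eq_twistedComm, twistedComm_ouGenerator_sub (parity_anticomm_twisted ha hw x)
      (parity_anticomm_star_twisted ha hw x) hVP hVQ, exp_half_add_exp_neg_half]
  split_ifs with hxy
  · subst hxy
    simp [neg_smul]
  · simp

theorem fermiDBar_fermiOU_sub (h : ℝ) (x y : ι) (g : FockSpace ι →L[ℂ] FockSpace ι) :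
    fermiDBar w a y (fermiOU w a h x g) - fermiOU w a h x (fermiDBar w a y g)
      = if x = y then ((-(2 * Real.cosh (h / 2)) : ℝ) : ℂ) • fermiDBar w a y g else 0 := by
  have hVP : star (w * a y) * (w * a x) + (w * a x) * star (w * a y)
      = (if x = y then (1 : ℂ) else 0) • 1 := by
    rw [star_twisted_twisted_anticomm ha hw]
    by_cases hxy : x = y
    · simp [hxy]
    · simp [hxy, Ne.symm hxy]
  have hVQ :
      star (w * a y) * star (w * a x) + star (w * a x) * star (w * a y) = (0 : ℂ) • 1 := by
    rw [star_twisted_anticomm ha hw, zero_smul]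
  rw [fermiOU_eq_ouGenerator, fermiOU_eq_ouGenerator, fermiDBar_eq_neg_twistedComm,
    fermiDBar_eq_neg_twistedComm, ouGenerator_neg, neg_sub_neg, ← neg_sub,
    twistedComm_ouGenerator_sub (parity_anticomm_twisted ha hw x)
      (parity_anticomm_star_twisted ha hw x) hVP hVQ, exp_half_add_exp_neg_half]
  split_ifs with hxy
  · subst hxy
    simp [neg_smul]
  · simp

theorem mem_centralizer_of_notMem {Λ : Finset ι} {y : ι} (hy : y ∉ Λ)
    {f : FockSpace ι →L[ℂ] FockSpace ι}
    (hf : f ∈ StarAlgebra.adjoin ℂ (a '' (Λ : Set ι))) :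
    f ∈ StarSubalgebra.centralizer ℂ {w * a y} := by
  refine StarAlgebra.adjoin_le ?_ hf
  rintro _ ⟨x, hx, rfl⟩
  have hxy : x ≠ y := fun h => hy (h ▸ hx)
  rw [SetLike.mem_coe, StarSubalgebra.mem_centralizer_iff]
  simp only [Set.mem_singleton_iff, forall_eq, star_parity_mul hw]
  exact ⟨commute_mul_left_of_anticomm (parity_anticomm_annihilation ha hw x)
      (annihilation_anticomm ha x y),
    commute_mul_right_of_anticomm (parity_anticomm_annihilation ha hw x)
      (by rw [annihilation_star_anticomm ha, if_neg hxy])⟩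

end Intertwining

end Fermion

/-- Intertwining relation between the Fermi Ornstein–Uhlenbeck generator and the
fermionic derivatives on locally supported observables:
`∂_y(𝓛₀ f) − 𝓛₀(∂_y f) = −2 cosh(h/2) ∂_y f`, and similarly for `∂̄_y`. -/
theorem fermiOU_intertwining {ι : Type*} [LinearOrder ι]
    (a : ι → (FockSpace ι →L[ℂ] FockSpace ι))
    (ha : ∀ (x : ι) (X : Finset ι),
      a x (fockBasis X) =
        if x ∈ X then
          ((-1 : ℂ) ^ (X.filter (fun y => y < x)).card) • fockBasis (X.erase x)
        else 0)
    (w : FockSpace ι →L[ℂ] FockSpace ι)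
    (hw : ∀ X : Finset ι, w (fockBasis X) = ((-1 : ℂ) ^ X.card) • fockBasis X)
    (h : ℝ) (Λ : Finset ι)
    (f : FockSpace ι →L[ℂ] FockSpace ι)
    (hf : f ∈ StarAlgebra.adjoin ℂ (a '' (Λ : Set ι)))
    (y : ι) :
    fermiD w a y (∑ x ∈ Λ, fermiOU w a h x f)
        - ∑ x ∈ Λ, fermiOU w a h x (fermiD w a y f)
      = ((-(2 * Real.cosh (h / 2)) : ℝ) : ℂ) • fermiD w a y f ∧
    fermiDBar w a y (∑ x ∈ Λ, fermiOU w a h x f)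
        - ∑ x ∈ Λ, fermiOU w a h x (fermiDBar w a y f)
      = ((-(2 * Real.cosh (h / 2)) : ℝ) : ℂ) • fermiDBar w a y f := by
  have hlocal : y ∉ Λ → fermiD w a y f = 0 ∧ fermiDBar w a y f = 0 := fun hy =>
    Fermion.fermiD_eq_zero_and_fermiDBar_eq_zero_of_mem_centralizer w a
      (Fermion.mem_centralizer_of_notMem ha hw hy hf)
  refine ⟨?_, ?_⟩
  · rw [Fermion.fermiD_sum, ← Finset.sum_sub_distrib]
    simp only [Fermion.fermiD_fermiOU_sub ha hw, Finset.sum_ite_eq']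
    split_ifs with hy
    · rfl
    · rw [(hlocal hy).1, smul_zero]
  · rw [Fermion.fermiDBar_sum, ← Finset.sum_sub_distrib]
    simp only [Fermion.fermiDBar_fermiOU_sub ha hw, Finset.sum_ite_eq']
    split_ifs with hy
    · rfl
    · rw [(hlocal hy).2, smul_zero]
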